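/- Let ι be a nonempty finite type, S : ι → ℝ logits, E ⊆ ι a nonempty set of edit tokens, δ ≥ 0, and ρ > 0 with ρ ≥ 1/|E|. Let p be a probability vector on ι satisfying p i ≥ ρ for every i ∈ E. Let A = softmax S and A^ESA = softmax S^ESA, where S^ESA i = S i + δ for i ∈ E and S^ESA i = S i otherwise. Then KL(p, A) − KL(p, A^ESA) ≥ δ·(|E|·ρ − 1) and δ·(|E|·ρ − 1) ≥ 0; in particular KL(p, A^ESA) ≤ KL(p, A). -/

import Mathlib

/-!
Since `log (softmax S i) = S i - log Z_S` with `Z_S = ∑ j, exp (S j)`, the difference of the two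
KL divergences is `δ · p(E) - (log Z_{S^ESA} - log Z_S)`. Raising the logits on `E` by `δ ≥ 0`
multiplies each term of the partition function by at most `exp δ`, so the second summand is at
most `δ`, while `p(E) ≥ |E| ρ ≥ 1`.
-/

open Finset

/-- The softmax distribution of logits `S` on a finite type. -/
noncomputable def softmax {ι : Type*} [Fintype ι] (S : ι → ℝ) (i : ι) : ℝ :=
  Real.exp (S i) / ∑ j, Real.exp (S j)

/-- Real-valued KL divergence between a probability vector `p` and a (positive) vector `q`. -/
noncomputable def KL {ι : Type*} [Fintype ι] (p q : ι → ℝ) : ℝ :=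
  ∑ i, p i * Real.log (p i / q i)

open Real

section Softmax

variable {ι : Type*} [Fintype ι] [Nonempty ι]

lemma log_sum_exp_le_of_le_add {S T : ι → ℝ} {δ : ℝ} (h : ∀ i, T i ≤ S i + δ) :
    log (∑ i, exp (T i)) ≤ log (∑ i, exp (S i)) + δ := by
  have hZ : 0 < ∑ i, exp (S i) := sum_pos (fun _ _ => exp_pos _) univ_nonempty
  have hle : ∑ i, exp (T i) ≤ exp δ * ∑ i, exp (S i) := by
    rw [mul_sum]
    exact sum_le_sum fun i _ => by rw [← exp_add, add_comm]; exact exp_le_exp.mpr (h i)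
  calc log (∑ i, exp (T i)) ≤ log (exp δ * ∑ i, exp (S i)) :=
        log_le_log (sum_pos (fun _ _ => exp_pos _) univ_nonempty) hle
    _ = log (∑ i, exp (S i)) + δ := by rw [log_mul (exp_ne_zero _) hZ.ne', log_exp, add_comm]

lemma softmax_pos (S : ι → ℝ) (i : ι) : 0 < softmax S i :=
  div_pos (exp_pos _) (sum_pos (fun _ _ => exp_pos _) univ_nonempty)

lemma log_softmax (S : ι → ℝ) (i : ι) :
    log (softmax S i) = S i - log (∑ j, exp (S j)) := by
  rw [softmax, log_div (exp_ne_zero _) (sum_pos (fun _ _ => exp_pos _) univ_nonempty).ne',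
    log_exp]

lemma KL_softmax {p : ι → ℝ} (hp : ∑ i, p i = 1) (S : ι → ℝ) :
    KL p (softmax S) = ∑ i, p i * log (p i) - ∑ i, p i * S i + log (∑ j, exp (S j)) := by
  have hterm : ∀ i, p i * log (p i / softmax S i) =
      p i * log (p i) - p i * S i + p i * log (∑ j, exp (S j)) := by
    intro i
    rcases eq_or_ne (p i) 0 with h0 | h0
    · simp [h0]
    · rw [log_div h0 (softmax_pos S i).ne', log_softmax]
      ring
  simp only [KL, hterm, sum_add_distrib, sum_sub_distrib, ← sum_mul, hp, one_mul]

end Softmax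

lemma sum_mul_ite_add {ι : Type*} [Fintype ι] [DecidableEq ι] (p S : ι → ℝ) (E : Finset ι)
    (δ : ℝ) :
    ∑ i, p i * (if i ∈ E then S i + δ else S i) = ∑ i, p i * S i + δ * ∑ i ∈ E, p i := by
  have h : ∀ i, p i * (if i ∈ E then S i + δ else S i) =
      p i * S i + if i ∈ E then δ * p i else 0 := fun i => by split_ifs <;> ring
  simp only [h, sum_add_distrib, sum_ite_mem, univ_inter, mul_sum]

theorem stmt0_general {ι : Type*} [Fintype ι] [Nonempty ι] [DecidableEq ι]
    (S : ι → ℝ) (E : Finset ι) (hE : E.Nonempty)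
    (δ : ℝ) (hδ : 0 ≤ δ) (ρ : ℝ) (hρE : 1 / (E.card : ℝ) ≤ ρ)
    (p : ι → ℝ) (hp1 : ∑ i, p i = 1)
    (hpE : ∀ i ∈ E, ρ ≤ p i) :
    δ * ((E.card : ℝ) * ρ - 1) ≤
        KL p (softmax S) - KL p (softmax (fun i => if i ∈ E then S i + δ else S i)) ∧
      0 ≤ δ * ((E.card : ℝ) * ρ - 1) ∧
      KL p (softmax (fun i => if i ∈ E then S i + δ else S i)) ≤ KL p (softmax S) := by
  have hcard : (0 : ℝ) < E.card := by exact_mod_cast hE.card_pos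
  have hEρ : 1 ≤ (E.card : ℝ) * ρ := by rwa [div_le_iff₀ hcard, mul_comm] at hρE
  have hmass : (E.card : ℝ) * ρ ≤ ∑ i ∈ E, p i := by
    simpa using card_nsmul_le_sum E p ρ hpE
  have hZ := log_sum_exp_le_of_le_add (S := S) (δ := δ)
    (T := fun i => if i ∈ E then S i + δ else S i) (fun i => by split_ifs <;> linarith)
  have hgain : δ * ((E.card : ℝ) * ρ - 1) ≤
      KL p (softmax S) - KL p (softmax (fun i => if i ∈ E then S i + δ else S i)) := by
    rw [KL_softmax hp1, KL_softmax hp1, sum_mul_ite_add]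
    linarith [mul_le_mul_of_nonneg_left hmass hδ]
  have hnonneg : 0 ≤ δ * ((E.card : ℝ) * ρ - 1) := mul_nonneg hδ (by linarith)
  exact ⟨hgain, hnonneg, by linarith⟩

theorem stmt0 {ι : Type*} [Fintype ι] [Nonempty ι] [DecidableEq ι]
    (S : ι → ℝ) (E : Finset ι) (hE : E.Nonempty)
    (δ : ℝ) (hδ : 0 ≤ δ) (ρ : ℝ) (hρ : 0 < ρ) (hρE : 1 / (E.card : ℝ) ≤ ρ)
    (p : ι → ℝ) (hp0 : ∀ i, 0 ≤ p i) (hp1 : ∑ i, p i = 1)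
    (hpE : ∀ i ∈ E, ρ ≤ p i) :
    δ * ((E.card : ℝ) * ρ - 1) ≤
        KL p (softmax S) - KL p (softmax (fun i => if i ∈ E then S i + δ else S i)) ∧
      0 ≤ δ * ((E.card : ℝ) * ρ - 1) ∧
      KL p (softmax (fun i => if i ∈ E then S i + δ else S i)) ≤ KL p (softmax S) :=
  stmt0_general S E hE δ hδ ρ hρE p hp1 hpE
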